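/- arXiv:1903.12169 — 3 statements merged into one kernel-verified Lean document; each statement's English description precedes it below -/
import Mathlib

section
/- Let α ≥ 1 and p ≥ 1. For real numbers s, t, define g(u) = sgn(u)·|u|^{1/α}. Then |g(s) - g(t)|^{αp} ≤ 2^{αp} |s - t|^p. Moreover, if s and t have the same sign (s·t ≥ 0), then |g(s) - g(t)|^{αp} ≤ |s - t|^p. -/
/-!
For `r = 1/α ∈ (0, 1]`, subadditivity of `x ↦ x ^ r` on `[0, ∞)` gives `|a ^ r - b ^ r| ≤ |a - b| ^ r`
for `a, b ≥ 0`; since `u ↦ sign u * |u| ^ r` is odd this covers all `s, t` of the same sign. For `s, t`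
of opposite signs, going through `0` costs a factor `2`, because then `|s|, |t| ≤ |s - t|`. Raising
to the power `α p` turns `|s - t| ^ r` into `|s - t| ^ p`.
-/

open Real

lemma abs_rpow_sub_rpow_le_abs_sub_rpow {a b r : ℝ} (ha : 0 ≤ a) (hb : 0 ≤ b) (hr₀ : 0 ≤ r)
    (hr₁ : r ≤ 1) : |a ^ r - b ^ r| ≤ |a - b| ^ r := by
  wlog hba : b ≤ a generalizing a b
  · rw [abs_sub_comm, abs_sub_comm a b]
    exact this hb ha (le_of_not_ge hba)
  have hsub : (a - b + b) ^ r ≤ (a - b) ^ r + b ^ r :=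
    rpow_add_le_add_rpow (sub_nonneg.2 hba) hb hr₀ hr₁
  rw [sub_add_cancel] at hsub
  rw [abs_of_nonneg (sub_nonneg.2 (rpow_le_rpow hb hba hr₀)), abs_of_nonneg (sub_nonneg.2 hba)]
  linarith

lemma abs_le_abs_sub_of_mul_nonpos {s t : ℝ} (hst : s * t ≤ 0) : |s| ≤ |s - t| := by
  rcases mul_nonpos_iff.1 hst with ⟨hs, ht⟩ | ⟨hs, ht⟩
  · rw [abs_of_nonneg hs, abs_of_nonneg (by linarith)]
    linarith
  · rw [abs_of_nonpos hs, abs_of_nonpos (by linarith)]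
    linarith

noncomputable def signedRpow (r u : ℝ) : ℝ := Real.sign u * |u| ^ r

namespace signedRpow

variable {r : ℝ}

lemma neg (r u : ℝ) : signedRpow r (-u) = -signedRpow r u := by
  simp only [signedRpow, Real.sign_neg, abs_neg, neg_mul]

lemma of_nonneg (hr : 0 < r) {u : ℝ} (hu : 0 ≤ u) : signedRpow r u = u ^ r := by
  rcases hu.eq_or_lt with rfl | hu
  · simp [signedRpow, zero_rpow hr.ne']
  · rw [signedRpow, Real.sign_of_pos hu, abs_of_pos hu, one_mul]

lemma abs_sub_le_of_mul_nonneg (hr₀ : 0 < r) (hr₁ : r ≤ 1) {s t : ℝ} (hst : 0 ≤ s * t) :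
    |signedRpow r s - signedRpow r t| ≤ |s - t| ^ r := by
  have nonneg : ∀ {s t : ℝ}, 0 ≤ s → 0 ≤ t →
      |signedRpow r s - signedRpow r t| ≤ |s - t| ^ r := fun hs ht => by
    rw [of_nonneg hr₀ hs, of_nonneg hr₀ ht]
    exact abs_rpow_sub_rpow_le_abs_sub_rpow hs ht hr₀.le hr₁
  rcases mul_nonneg_iff.1 hst with ⟨hs, ht⟩ | ⟨hs, ht⟩
  · exact nonneg hs ht
  · have h := nonneg (neg_nonneg.2 hs) (neg_nonneg.2 ht)
    rwa [neg, neg, neg_sub_neg, abs_sub_comm, neg_sub_neg, abs_sub_comm t] at h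

lemma abs_sub_le (hr₀ : 0 < r) (hr₁ : r ≤ 1) (s t : ℝ) :
    |signedRpow r s - signedRpow r t| ≤ 2 * |s - t| ^ r := by
  rcases le_or_gt 0 (s * t) with hst | hst
  · have := abs_sub_le_of_mul_nonneg hr₀ hr₁ hst
    have : 0 ≤ |s - t| ^ r := rpow_nonneg (abs_nonneg _) r
    linarith
  have through_zero : ∀ {u : ℝ}, |u| ≤ |s - t| → |signedRpow r u - signedRpow r 0| ≤ |s - t| ^ r :=
    fun hu => (abs_sub_le_of_mul_nonneg hr₀ hr₁ (by simp)).trans <| by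
      rw [sub_zero]; exact rpow_le_rpow (abs_nonneg _) hu hr₀.le
  have hs := through_zero (abs_le_abs_sub_of_mul_nonpos hst.le)
  have ht := through_zero (u := t) <| by
    rw [abs_sub_comm]; exact abs_le_abs_sub_of_mul_nonpos (by linarith [mul_comm s t])
  calc |signedRpow r s - signedRpow r t|
      ≤ |signedRpow r s - signedRpow r 0| + |signedRpow r 0 - signedRpow r t| := _root_.abs_sub_le _ _ _
    _ ≤ 2 * |s - t| ^ r := by rw [abs_sub_comm (signedRpow r 0)]; linarith

end signedRpow

lemma rpow_mul_le_mul_rpow_of_le_mul_rpow_inv {x y c α p : ℝ} (hx : 0 ≤ x) (hy : 0 ≤ y)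
    (hc : 0 ≤ c) (hα : α ≠ 0) (hαp : 0 ≤ α * p) (h : x ≤ c * y ^ (1 / α)) :
    x ^ (α * p) ≤ c ^ (α * p) * y ^ p := by
  calc x ^ (α * p) ≤ (c * y ^ (1 / α)) ^ (α * p) := rpow_le_rpow hx h hαp
    _ = c ^ (α * p) * y ^ p := by
      rw [mul_rpow hc (rpow_nonneg hy _), ← rpow_mul hy, one_div, inv_mul_cancel_left₀ hα]

/-- for `g(u) = sgn(u)·|u|^{1/α}` with `α, p ≥ 1`, one has
`|g(s) - g(t)|^{αp} ≤ 2^{αp} |s - t|^p`, and if `s·t ≥ 0` then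
`|g(s) - g(t)|^{αp} ≤ |s - t|^p`. -/
theorem sign_rpow_oscillation_bound (α p : ℝ) (hα : 1 ≤ α) (hp : 1 ≤ p)
    (g : ℝ → ℝ) (hg : ∀ u, g u = Real.sign u * |u| ^ (1 / α)) (s t : ℝ) :
    |g s - g t| ^ (α * p) ≤ 2 ^ (α * p) * |s - t| ^ p ∧
    (0 ≤ s * t → |g s - g t| ^ (α * p) ≤ |s - t| ^ p) := by
  obtain rfl : g = signedRpow (1 / α) := funext hg
  have hα₀ : 0 < α := one_pos.trans_le hα
  have hr₀ : 0 < 1 / α := one_div_pos.2 hα₀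
  have hr₁ : 1 / α ≤ 1 := (div_le_one hα₀).2 hα
  have hαp : 0 ≤ α * p := by positivity
  refine ⟨rpow_mul_le_mul_rpow_of_le_mul_rpow_inv (abs_nonneg _) (abs_nonneg _) zero_le_two
    hα₀.ne' hαp (signedRpow.abs_sub_le hr₀ hr₁ s t), fun hst => ?_⟩
  simpa using rpow_mul_le_mul_rpow_of_le_mul_rpow_inv (abs_nonneg _) (abs_nonneg _) zero_le_one
    hα₀.ne' hαp (by simpa using signedRpow.abs_sub_le_of_mul_nonneg hr₀ hr₁ hst)
end

section
/- Let B be a finite set, f : B → ℝ, and suppose the values of f along every 'chain of neighbors' change by at most 2, in the following abstract form: there is a point x₀ ∈ B and a nonincreasing family of sets E_l = {x ∈ B : |f(x) - f(x₀)| > l} for l ∈ ℕ. If for integers l ≥ N one has |E_{2l}| ≤ 2^{N/2+1}·2^{-l}·|B| for some fixed even integer N, and |f_B - f(x₀)| ≤ N, then there exist constants c₁, c₂ > 0 depending only on N such that |{x ∈ B : |f(x) - f_B| > λ}|/|B| ≤ c₁·exp(-c₂ λ) for all λ > 0. -/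
/-!
Since `|f_B - f(x₀)| ≤ N`, the triangle inequality puts `{|f - f_B| > 2l + N}` inside `E_{2l}`,
so the distribution function of `|f - f_B|` is at most `2^{N/2+1} 2^{-l}` at the points `2l + N`,
`l ≥ N`. Being antitone, it is then `O(2^{-λ/2})` between these points, and below `3N` the
trivial bound `1` suffices; hence `c₂ = (log 2) / 2`.
-/

open Finset

noncomputable def levelRatio {X : Type*} (B : Finset X) (g : X → ℝ) (t : ℝ) : ℝ :=
  (#(B.filter fun x => t < |g x|) : ℝ) / #B

section levelRatio

variable {X : Type*} (B : Finset X)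

theorem levelRatio_antitone (g : X → ℝ) : Antitone (levelRatio B g) := by
  intro s t hst
  unfold levelRatio
  gcongr

theorem levelRatio_le_one (g : X → ℝ) (t : ℝ) : levelRatio B g t ≤ 1 :=
  div_le_one_of_le₀ (by exact_mod_cast card_filter_le _ _) (Nat.cast_nonneg _)

theorem levelRatio_le_of_abs_sub_le (f : X → ℝ) {a c d : ℝ} (h : |c - a| ≤ d) (t : ℝ) :
    levelRatio B (fun x => f x - c) (t + d) ≤ levelRatio B (fun x => f x - a) t := by
  have hsub : B.filter (fun x => t + d < |f x - c|) ⊆ B.filter (fun x => t < |f x - a|) :=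
    monotone_filter_right B fun x _ hx => by linarith [abs_sub_le (f x) a c, abs_sub_comm a c]
  unfold levelRatio
  gcongr

end levelRatio

theorem Antitone.le_mul_two_rpow_neg_half_of_dyadic {u : ℝ → ℝ} (hu : Antitone u) {A : ℝ}
    {M : ℕ} (hA : 1 ≤ A) (hu_le_one : ∀ t, u t ≤ 1)
    (hdyadic : ∀ l : ℕ, M ≤ l → u (2 * l + M) ≤ A * 2 ^ (-(l : ℝ))) (t : ℝ) :
    u t ≤ A * 2 ^ (2 * M + 1) * 2 ^ (-t / 2) := by
  have hpow : (2 : ℝ) ^ (2 * M + 1) * 2 ^ (-t / 2) = 2 ^ ((2 * M + 1 : ℝ) + -t / 2) := by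
    rw [Real.rpow_add two_pos, ← Real.rpow_natCast]
    push_cast
    rfl
  rw [mul_assoc, hpow]
  rcases lt_or_ge t (3 * M) with ht | ht
  · calc u t ≤ 1 := hu_le_one t
      _ ≤ A * 2 ^ ((2 * M + 1 : ℝ) + -t / 2) :=
        one_le_mul_of_one_le_of_one_le hA (Real.one_le_rpow one_le_two (by linarith))
  · have hM : (0 : ℝ) ≤ M := M.cast_nonneg
    set l := ⌊(t - M) / 2⌋₊
    have hlM : M ≤ l := Nat.le_floor (by linarith)
    have hl_le : 2 * l + M ≤ t := by linarith [Nat.floor_le (a := (t - M) / 2) (by linarith)]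
    have hl_gt : t < 2 * l + M + 2 := by linarith [Nat.lt_floor_add_one ((t - M) / 2)]
    calc u t ≤ u (2 * l + M) := hu hl_le
      _ ≤ A * 2 ^ (-(l : ℝ)) := hdyadic l hlM
      _ ≤ A * 2 ^ ((2 * M + 1 : ℝ) + -t / 2) := by
        gcongr
        · exact one_le_two
        · linarith

theorem Real.exp_neg_half_log_two_mul (t : ℝ) :
    Real.exp (-(Real.log 2 / 2) * t) = 2 ^ (-t / 2) := by
  rw [Real.rpow_def_of_pos two_pos]
  ring_nf

theorem finite_set_john_nirenberg_general {X : Type*} (N : ℕ) :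
    ∃ c₁ c₂ : ℝ, 0 < c₁ ∧ 0 < c₂ ∧
      ∀ (B : Finset X) (f : X → ℝ) (x₀ : X), x₀ ∈ B →
        |((B.card : ℝ))⁻¹ * ∑ x ∈ B, f x - f x₀| ≤ (N : ℝ) →
        (∀ l : ℕ, N ≤ l →
          ((B.filter (fun x => (2 * (l : ℝ)) < |f x - f x₀|)).card : ℝ) ≤
            2 ^ (N / 2 + 1) * 2 ^ (-(l : ℝ)) * (B.card : ℝ)) →
        ∀ lam : ℝ, 0 < lam →
          ((B.filter
              (fun x => lam < |f x - ((B.card : ℝ))⁻¹ * ∑ y ∈ B, f y|)).card : ℝ) /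
              (B.card : ℝ) ≤ c₁ * Real.exp (-c₂ * lam) := by
  refine ⟨2 ^ (N / 2 + 1) * 2 ^ (2 * N + 1), Real.log 2 / 2, by positivity,
    by positivity, ?_⟩
  intro B f x₀ hx₀ hmean hE lam _
  have hB : (0 : ℝ) < #B := by exact_mod_cast card_pos.mpr ⟨x₀, hx₀⟩
  rw [Real.exp_neg_half_log_two_mul]
  refine (levelRatio_antitone B _).le_mul_two_rpow_neg_half_of_dyadic (one_le_pow₀ one_le_two)
    (levelRatio_le_one B _) (fun l hl => ?_) lam
  exact (levelRatio_le_of_abs_sub_le B f hmean _).trans ((div_le_iff₀ hB).2 (hE l hl))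

/-- if on a finite set `B` (with counting measure) one has
`|f_B - f(x₀)| ≤ N` and `|E_{2l}| ≤ 2^{N/2+1}·2^{-l}·|B|` for all integers `l ≥ N`
(where `E_l = {x ∈ B : |f(x) - f(x₀)| > l}` and `N` is a fixed even positive integer),
then a John–Nirenberg type exponential bound holds with constants depending only on `N`. -/
theorem finite_set_john_nirenberg {X : Type*} (N : ℕ) (hN : 0 < N) (hNeven : Even N) :
    ∃ c₁ c₂ : ℝ, 0 < c₁ ∧ 0 < c₂ ∧
      ∀ (B : Finset X) (f : X → ℝ) (x₀ : X), x₀ ∈ B →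
        |((B.card : ℝ))⁻¹ * ∑ x ∈ B, f x - f x₀| ≤ (N : ℝ) →
        (∀ l : ℕ, N ≤ l →
          ((B.filter (fun x => (2 * (l : ℝ)) < |f x - f x₀|)).card : ℝ) ≤
            2 ^ (N / 2 + 1) * 2 ^ (-(l : ℝ)) * (B.card : ℝ)) →
        ∀ lam : ℝ, 0 < lam →
          ((B.filter
              (fun x => lam < |f x - ((B.card : ℝ))⁻¹ * ∑ y ∈ B, f y|)).card : ℝ) /
              (B.card : ℝ) ≤ c₁ * Real.exp (-c₂ * lam) :=
  finite_set_john_nirenberg_general N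
end

section
/- Define p₀ = sup{p ∈ [1, ∞) : BMO^p(𝕏) = BMO^1(𝕏)} and assume p₀ < ∞ and BMO^{p₀}(𝕏) = BMO^1(𝕏). Then, granting that strict inclusion BMO^{p₁} ⊊ BMO^{p₂} for some pair implies BMO^{αp₁} ⊊ BMO^{αp₂} for all α > 1 (the dilation lemma), one concludes: BMO^p(𝕏) = BMO^1(𝕏) for all p ≤ p₀, and BMO^{p₁}(𝕏) ⊊ BMO^{p₂}(𝕏) for all 1 ≤ p₁ < p₂ with p₂ > p₀. -/
open MeasureTheory Metric
open scoped ENNReal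

/-- The average of `f` over `B` with respect to `μ`. -/
noncomputable def ballAvg {X : Type*} [MeasurableSpace X] (μ : Measure X)
    (B : Set X) (f : X → ℝ) : ℝ :=
  ((μ B).toReal)⁻¹ * ∫ x in B, f x ∂μ

/-- The normalized `p`-th mean oscillation of `f` on `B`:
`(1/μ(B)) ∫_B |f - f_B|^p dμ`, valued in `ℝ≥0∞`. -/
noncomputable def meanOsc {X : Type*} [MeasurableSpace X] (μ : Measure X)
    (p : ℝ) (f : X → ℝ) (B : Set X) : ℝ≥0∞ :=
  (∫⁻ x in B, ENNReal.ofReal (|f x - ballAvg μ B f| ^ p) ∂μ) / μ B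

/-- The `BMO^p` seminorm `‖f‖_{*,p}`: the supremum over all (open) balls of the
`p`-th root of the normalized `p`-th mean oscillation. -/
noncomputable def bmoNorm {X : Type*} [MetricSpace X] [MeasurableSpace X]
    (μ : Measure X) (p : ℝ) (f : X → ℝ) : ℝ≥0∞ :=
  ⨆ (c : X) (r : ℝ) (_ : 0 < r), (meanOsc μ p f (ball c r)) ^ (1 / p)

/-- `f ∈ BMO^p(𝕏)`: `f` is integrable on every ball and `‖f‖_{*,p} < ∞`. -/
def MemBMO {X : Type*} [MetricSpace X] [MeasurableSpace X]
    (μ : Measure X) (p : ℝ) (f : X → ℝ) : Prop :=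
  (∀ (c : X) (r : ℝ), 0 < r → IntegrableOn f (ball c r) μ) ∧ bmoNorm μ p f < ⊤

/-!
Only the order structure of `p ↦ BMO^p` enters, so `M p` below is any family of predicates
decreasing in `p ≥ 1`. Above `p₀ = sup {p | M p = M 1}` the inclusion `M p₀ ⊋ M q` is
strict for every `q > p₀`. A pair `p₁ < p₂` with `p₁ ≤ p₀` is then
strict because `M p₁ = M 1 = M p₀`, and a pair with `p₀ < p₁` is the dilation by `p₁ / p₀`
of the strict pair `(p₀, p₀ p₂ / p₁)`.
-/

section Trichotomy

variable {α : Type*} (M : ℝ → α → Prop)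

def coincidenceSet : Set ℝ := {p | 1 ≤ p ∧ ∀ f, M p f ↔ M 1 f}

variable {M}

theorem one_le_sSup_coincidenceSet (hbdd : BddAbove (coincidenceSet M)) :
    1 ≤ sSup (coincidenceSet M) :=
  le_csSup hbdd ⟨le_rfl, fun _ => Iff.rfl⟩

theorem exists_one_not_of_sSup_coincidenceSet_lt
    (hmono : ∀ p q : ℝ, 1 ≤ p → p ≤ q → ∀ f, M q f → M p f)
    (hbdd : BddAbove (coincidenceSet M)) {q : ℝ} (hq : sSup (coincidenceSet M) < q) :
    ∃ f, M 1 f ∧ ¬ M q f := by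
  have hq1 : 1 ≤ q := (one_le_sSup_coincidenceSet hbdd).trans hq.le
  have hq_not_mem : q ∉ coincidenceSet M := notMem_of_csSup_lt hq hbdd
  by_contra! h
  exact hq_not_mem ⟨hq1, fun f => ⟨hmono 1 q le_rfl hq1 f, h f⟩⟩

theorem iff_one_of_le_of_iff_one
    (hmono : ∀ p q : ℝ, 1 ≤ p → p ≤ q → ∀ f, M q f → M p f)
    {p₀ : ℝ} (hclosed : ∀ f, M p₀ f ↔ M 1 f) {p : ℝ} (hp : 1 ≤ p) (hpp₀ : p ≤ p₀) (f : α) :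
    M p f ↔ M 1 f :=
  ⟨hmono 1 p le_rfl hp f, fun h => hmono p p₀ hp hpp₀ f ((hclosed f).mpr h)⟩

theorem exists_not_of_lt_of_forall_exists_not
    (hdilation : ∀ p₁ p₂ : ℝ, 1 ≤ p₁ → p₁ < p₂ → (∃ f, M p₁ f ∧ ¬ M p₂ f) →
      ∀ a : ℝ, 1 < a → ∃ g, M (a * p₁) g ∧ ¬ M (a * p₂) g)
    {p₀ : ℝ} (hp₀ : 1 ≤ p₀) (hstrict : ∀ q, p₀ < q → ∃ f, M p₀ f ∧ ¬ M q f)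
    {p₁ p₂ : ℝ} (h₀₁ : p₀ < p₁) (h₁₂ : p₁ < p₂) :
    ∃ f, M p₁ f ∧ ¬ M p₂ f := by
  have hp₀pos : 0 < p₀ := one_pos.trans_le hp₀
  have hp₁pos : 0 < p₁ := hp₀pos.trans h₀₁
  have hq : p₀ < p₀ * p₂ / p₁ := by
    rw [lt_div_iff₀ hp₁pos]
    nlinarith
  obtain ⟨g, hg₁, hg₂⟩ := hdilation p₀ _ hp₀ hq (hstrict _ hq) (p₁ / p₀)
    ((one_lt_div hp₀pos).mpr h₀₁)
  refine ⟨g, ?_, ?_⟩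
  · rwa [div_mul_cancel₀ _ hp₀pos.ne'] at hg₁
  · rwa [show p₁ / p₀ * (p₀ * p₂ / p₁) = p₂ by field_simp] at hg₂

end Trichotomy

theorem bmo_trichotomy_closed_case_general
    {X : Type*} [MetricSpace X] [MeasurableSpace X] (μ : Measure X)
    (hmono : ∀ p q : ℝ, 1 ≤ p → p ≤ q → ∀ f : X → ℝ, MemBMO μ q f → MemBMO μ p f)
    (hdilation : ∀ p₁ p₂ : ℝ, 1 ≤ p₁ → p₁ < p₂ →
      (∃ f : X → ℝ, MemBMO μ p₁ f ∧ ¬ MemBMO μ p₂ f) →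
      ∀ α : ℝ, 1 < α → ∃ g : X → ℝ, MemBMO μ (α * p₁) g ∧ ¬ MemBMO μ (α * p₂) g)
    (p₀ : ℝ)
    (hp₀def : p₀ = sSup {p : ℝ | 1 ≤ p ∧ ∀ f : X → ℝ, MemBMO μ p f ↔ MemBMO μ 1 f})
    (hbdd : BddAbove {p : ℝ | 1 ≤ p ∧ ∀ f : X → ℝ, MemBMO μ p f ↔ MemBMO μ 1 f})
    (hclosed : ∀ f : X → ℝ, MemBMO μ p₀ f ↔ MemBMO μ 1 f) :
    (∀ p : ℝ, 1 ≤ p → p ≤ p₀ → ∀ f : X → ℝ, MemBMO μ p f ↔ MemBMO μ 1 f) ∧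
    (∀ p₁ p₂ : ℝ, 1 ≤ p₁ → p₁ < p₂ → p₀ < p₂ →
      ∃ f : X → ℝ, MemBMO μ p₁ f ∧ ¬ MemBMO μ p₂ f) := by
  have hp₀ : 1 ≤ p₀ := hp₀def ▸ one_le_sSup_coincidenceSet hbdd
  have hgap : ∀ q, p₀ < q → ∃ f, MemBMO μ 1 f ∧ ¬ MemBMO μ q f := fun q hq =>
    exists_one_not_of_sSup_coincidenceSet_lt hmono hbdd (hp₀def ▸ hq)
  refine ⟨fun _ => iff_one_of_le_of_iff_one hmono hclosed, fun p₁ p₂ hp₁ h₁₂ h₀₂ => ?_⟩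
  rcases le_or_gt p₁ p₀ with h₁₀ | h₀₁
  · obtain ⟨f, hf₁, hf₂⟩ := hgap p₂ h₀₂
    exact ⟨f, (iff_one_of_le_of_iff_one hmono hclosed hp₁ h₁₀ f).mpr hf₁, hf₂⟩
  · refine exists_not_of_lt_of_forall_exists_not hdilation hp₀ (fun q hq => ?_) h₀₁ h₁₂
    obtain ⟨f, hf₁, hf₂⟩ := hgap q hq
    exact ⟨f, (hclosed f).mpr hf₁, hf₂⟩

/-- case (c) of Theorem 1: let
`p₀ = sup{p ∈ [1,∞) : BMO^p(𝕏) = BMO^1(𝕏)}` be finite (the defining set being bounded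
above) and suppose `BMO^{p₀}(𝕏) = BMO^1(𝕏)`. Granting the Hölder inclusions and the
dilation lemma, one concludes: `BMO^p(𝕏) = BMO^1(𝕏)` for all `1 ≤ p ≤ p₀`, and
`BMO^{p₁}(𝕏) ⊊ BMO^{p₂}(𝕏)` for all `1 ≤ p₁ < p₂` with `p₂ > p₀`. -/
theorem bmo_trichotomy_closed_case
    {X : Type*} [MetricSpace X] [MeasurableSpace X] (μ : Measure X)
    (hμ : ∀ (c : X) (r : ℝ), 0 < r → 0 < μ (ball c r) ∧ μ (ball c r) < ⊤)
    (hmono : ∀ p q : ℝ, 1 ≤ p → p ≤ q → ∀ f : X → ℝ, MemBMO μ q f → MemBMO μ p f)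
    (hdilation : ∀ p₁ p₂ : ℝ, 1 ≤ p₁ → p₁ < p₂ →
      (∃ f : X → ℝ, MemBMO μ p₁ f ∧ ¬ MemBMO μ p₂ f) →
      ∀ α : ℝ, 1 < α → ∃ g : X → ℝ, MemBMO μ (α * p₁) g ∧ ¬ MemBMO μ (α * p₂) g)
    (p₀ : ℝ)
    (hp₀def : p₀ = sSup {p : ℝ | 1 ≤ p ∧ ∀ f : X → ℝ, MemBMO μ p f ↔ MemBMO μ 1 f})
    (hbdd : BddAbove {p : ℝ | 1 ≤ p ∧ ∀ f : X → ℝ, MemBMO μ p f ↔ MemBMO μ 1 f})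
    (hclosed : ∀ f : X → ℝ, MemBMO μ p₀ f ↔ MemBMO μ 1 f) :
    (∀ p : ℝ, 1 ≤ p → p ≤ p₀ → ∀ f : X → ℝ, MemBMO μ p f ↔ MemBMO μ 1 f) ∧
    (∀ p₁ p₂ : ℝ, 1 ≤ p₁ → p₁ < p₂ → p₀ < p₂ →
      ∃ f : X → ℝ, MemBMO μ p₁ f ∧ ¬ MemBMO μ p₂ f) :=
  bmo_trichotomy_closed_case_general μ hmono hdilation p₀ hp₀def hbdd hclosed
end
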